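/- arXiv:1603.07199 — 2 statements merged into one kernel-verified Lean document; each statement's English description precedes it below -/
import Mathlib

section
/- Let S be a simple Cu-semigroup with largest element ∞ satisfying β-comparison. If there exists a nonzero x ∈ S with β(x, y) = 0, then y = ∞. Conversely, if this implication holds for all y, then S has β-comparison. -/
open scoped ENNReal

/-- Compact containment (way-below) relation: `a ≪ b` iff for every monotone sequence
with a supremum dominating `b`, some term dominates `a`. -/
def CuWayBelow {S : Type*} [Preorder S] (a b : S) : Prop :=
  ∀ c : ℕ → S, Monotone c → ∀ s : S, IsLUB (Set.range c) s → b ≤ s → ∃ n, a ≤ c n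

/-- The axioms (O1)-(O4) of the category Cu, together with positivity of the order. -/
structure CuSemigroup (S : Type*) [AddCommMonoid S] [PartialOrder S] [IsOrderedAddMonoid S] : Prop where
  pos : ∀ x : S, 0 ≤ x
  O1 : ∀ c : ℕ → S, Monotone c → ∃ s : S, IsLUB (Set.range c) s
  O2 : ∀ a : S, ∃ c : ℕ → S, (∀ n, CuWayBelow (c n) (c (n + 1))) ∧ IsLUB (Set.range c) a
  O3 : ∀ a' a b' b : S, CuWayBelow a' a → CuWayBelow b' b → CuWayBelow (a' + b') (a + b)
  O4 : ∀ c d : ℕ → S, Monotone c → Monotone d → ∀ s t : S,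
      IsLUB (Set.range c) s → IsLUB (Set.range d) t →
      IsLUB (Set.range fun n => c n + d n) (s + t)

/-- Simplicity: every nonzero element is full. -/
def CuSimple (S : Type*) [AddCommMonoid S] [PartialOrder S] [IsOrderedAddMonoid S] : Prop :=
  ∀ x y : S, x ≠ 0 → y ≠ 0 → ∀ y' : S, CuWayBelow y' y → ∃ n : ℕ, y' ≤ n • x

/-- A full sequence: increasing and absorbing every compactly contained element. -/
def CuFullSeq {S : Type*} [AddCommMonoid S] [PartialOrder S] [IsOrderedAddMonoid S] (x : ℕ → S) : Prop :=
  Monotone x ∧ ∀ z' z : S, CuWayBelow z' z → ∃ n m : ℕ, z' ≤ m • x n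

/-- The value `β(x,y) = inf { l/k : k ≥ 1, k•x ≤ l•y }`. -/
noncomputable def beta {W : Type*} [AddCommMonoid W] [PartialOrder W] [IsOrderedAddMonoid W] (x y : W) : ℝ :=
  sInf {r : ℝ | ∃ k l : ℕ, 0 < k ∧ k • x ≤ l • y ∧ r = (l : ℝ) / (k : ℝ)}

/-- ω-comparison. -/
def OmegaComparison (S : Type*) [AddCommMonoid S] [PartialOrder S] [IsOrderedAddMonoid S] : Prop :=
  ∀ (x' x : S) (y : ℕ → S), CuWayBelow x' x →
    (∀ j : ℕ, ∃ k : ℕ, 1 ≤ k ∧ (k + 1) • x ≤ k • y j) →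
    ∃ n : ℕ, x' ≤ ∑ j ∈ Finset.range n, y j

/-- β-comparison. -/
def BetaComparison (S : Type*) [AddCommMonoid S] [PartialOrder S] [IsOrderedAddMonoid S] : Prop :=
  ∀ x y : S, (∃ n : ℕ, x ≤ n • y) → beta x y = 0 → x ≤ y

/-!
Since `β(m • x, y) ≤ m β(x, y)`, β-comparison upgrades `β(x, y) = 0` to `m • x ≤ y` for every `m`.
By simplicity every element compactly contained in some element lies below a multiple of a
nonzero `x`, and by (O2) every element is a supremum of such elements, so `y` is the largest
element. Conversely, if `β(x, y) = 0` with `x ≠ 0` forces `y = ∞`, then `x ≤ y` holds trivially.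
-/

lemma CuWayBelow.le {S : Type*} [Preorder S] {a b : S} (h : CuWayBelow a b) : a ≤ b := by
  obtain ⟨n, hn⟩ := h (fun _ => b) monotone_const b (by simp [isLUB_singleton]) le_rfl
  exact hn

section Beta

open scoped Pointwise

variable {W : Type*} [AddCommMonoid W] [PartialOrder W]

def betaSet (x y : W) : Set ℝ :=
  {r : ℝ | ∃ k l : ℕ, 0 < k ∧ k • x ≤ l • y ∧ r = (l : ℝ) / (k : ℝ)}

lemma beta_eq_sInf_betaSet [IsOrderedAddMonoid W] (x y : W) : beta x y = sInf (betaSet x y) := rfl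

lemma betaSet_nonneg (x y : W) : ∀ r ∈ betaSet x y, 0 ≤ r := by
  rintro r ⟨k, l, -, -, rfl⟩
  positivity

lemma beta_nonneg [IsOrderedAddMonoid W] (x y : W) : 0 ≤ beta x y :=
  Real.sInf_nonneg (betaSet_nonneg x y)

lemma betaSet_nonempty {x y : W} {n : ℕ} (hxy : x ≤ n • y) : (betaSet x y).Nonempty :=
  ⟨(n : ℝ) / 1, 1, n, one_pos, by simpa using hxy, by norm_num⟩

lemma natCast_smul_betaSet_subset [IsOrderedAddMonoid W] (x y : W) (m : ℕ) :
    (m : ℝ) • betaSet x y ⊆ betaSet (m • x) y := by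
  rintro _ ⟨_, ⟨k, l, hk, hkl, rfl⟩, rfl⟩
  refine ⟨k, m * l, hk, ?_, by push_cast; ring⟩
  calc k • m • x = m • k • x := smul_comm k m x
    _ ≤ m • l • y := nsmul_le_nsmul_right hkl m
    _ = (m * l) • y := (mul_smul m l y).symm

lemma beta_nsmul_le [IsOrderedAddMonoid W] {x y : W} {n : ℕ} (hxy : x ≤ n • y) (m : ℕ) :
    beta (m • x) y ≤ m * beta x y := by
  rw [beta_eq_sInf_betaSet, beta_eq_sInf_betaSet, ← smul_eq_mul,
    ← Real.sInf_smul_of_nonneg (Nat.cast_nonneg m)]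
  exact csInf_le_csInf ⟨0, betaSet_nonneg _ _⟩ ((betaSet_nonempty hxy).smul_set)
    (natCast_smul_betaSet_subset x y m)

lemma beta_nsmul_eq_zero [IsOrderedAddMonoid W] {x y : W} {n : ℕ} (hxy : x ≤ n • y)
    (hβ : beta x y = 0) (m : ℕ) : beta (m • x) y = 0 :=
  le_antisymm (by simpa [hβ] using beta_nsmul_le hxy m) (beta_nonneg _ _)

lemma BetaComparison.nsmul_le_of_beta_eq_zero [IsOrderedAddMonoid W] (hW : BetaComparison W)
    {x y : W} {n : ℕ} (hxy : x ≤ n • y) (hβ : beta x y = 0) (m : ℕ) : m • x ≤ y := by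
  refine hW (m • x) y ⟨m * n, ?_⟩ (beta_nsmul_eq_zero hxy hβ m)
  calc m • x ≤ m • n • y := nsmul_le_nsmul_right hxy m
    _ = (m * n) • y := (mul_smul m n y).symm

end Beta

lemma CuSemigroup.le_of_forall_nsmul_le {S : Type*} [AddCommMonoid S] [PartialOrder S]
    [IsOrderedAddMonoid S] (hCu : CuSemigroup S) (hsimple : CuSimple S) {x y : S} (hx : x ≠ 0)
    (hxy : ∀ m : ℕ, m • x ≤ y) (z : S) : z ≤ y := by
  obtain ⟨c, hc, hlub⟩ := hCu.O2 z
  refine hlub.2 ?_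
  rintro _ ⟨j, rfl⟩
  by_cases h0 : c (j + 1) = 0
  · calc c j ≤ c (j + 1) := (hc j).le
      _ = 0 • x := by rw [h0, zero_nsmul]
      _ ≤ y := hxy 0
  · obtain ⟨m, hm⟩ := hsimple x (c (j + 1)) hx h0 (c j) (hc j)
    exact hm.trans (hxy m)

/-- In a simple Cu-semigroup with largest element `∞`, β-comparison holds iff
`β(x,y) = 0` for some nonzero `x` (with `x ∝ y`) forces `y = ∞`. -/
theorem stmt13 {S : Type*} [AddCommMonoid S] [PartialOrder S] [IsOrderedAddMonoid S] (hCu : CuSemigroup S)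
    (hsimple : CuSimple S) (infty : S) (htop : ∀ s : S, s ≤ infty) :
    BetaComparison S ↔
      (∀ y : S, (∃ x : S, x ≠ 0 ∧ (∃ n : ℕ, x ≤ n • y) ∧ beta x y = 0) → y = infty) := by
  constructor
  · rintro hS y ⟨x, hx, ⟨n, hxy⟩, hβ⟩
    exact le_antisymm (htop y)
      (hCu.le_of_forall_nsmul_le hsimple hx (hS.nsmul_le_of_beta_eq_zero hxy hβ) infty)
  · intro h x y hxy hβ
    by_cases hx : x = 0
    · exact hx ▸ hCu.pos y
    · rw [h y ⟨x, hx, hxy, hβ⟩]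
      exact htop x
end

section
/- Let S be a simple Cu-semigroup with property (QQ). Then S has the corona factorization property, in the formulation: whenever (yₙ) is a sequence in S with yₙ ≪ ∞ and m·Σ_{n≥k} yₙ = ∞ for some fixed m ≥ 1 and all k, then Σ_{n≥1} yₙ = ∞. -/
open scoped ENNReal

/-! Since `m • Σ yₙ = ∞` is properly infinite, (QQ) makes `s = Σ yₙ` properly infinite, so `s`
absorbs all its multiples. By simplicity every element compactly contained in `∞` lies below some
multiple of `s ≠ 0`, hence below `s`, and (O2) gives `∞ ≤ s`. -/

theorem CuWayBelow.trans_le {S : Type*} [Preorder S] {a b b' : S} (h : CuWayBelow a b)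
    (hb : b ≤ b') : CuWayBelow a b' :=
  fun c hc t ht hle => h c hc t ht (hb.trans hle)

theorem nsmul_le_self_of_two_nsmul_le {S : Type*} [AddMonoid S] [Preorder S] [AddLeftMono S]
    {s : S} (h0 : 0 ≤ s) (h2 : 2 • s ≤ s) : ∀ n : ℕ, n • s ≤ s
  | 0 => by simpa using h0
  | n + 1 =>
    calc (n + 1) • s = s + n • s := succ_nsmul' s n
      _ ≤ s + s := add_le_add_right (nsmul_le_self_of_two_nsmul_le h0 h2 n) s
      _ = 2 • s := (two_nsmul s).symm
      _ ≤ s := h2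

namespace CuSemigroup

variable {S : Type*} [AddCommMonoid S] [PartialOrder S] [IsOrderedAddMonoid S]

theorem le_of_forall_wayBelow_le (hCu : CuSemigroup S) {a s : S}
    (h : ∀ a', CuWayBelow a' a → a' ≤ s) : a ≤ s := by
  obtain ⟨c, hc, hlub⟩ := hCu.O2 a
  refine hlub.2 ?_
  rintro _ ⟨n, rfl⟩
  exact h _ ((hc n).trans_le (hlub.1 ⟨n + 1, rfl⟩))

theorem eq_top_of_two_nsmul_le (hCu : CuSemigroup S) (hsimple : CuSimple S) {infty : S}
    (htop : ∀ s : S, s ≤ infty) {s : S} (hs0 : s ≠ 0) (h2 : 2 • s ≤ s) : s = infty := by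
  have hinf0 : infty ≠ 0 := fun h => hs0 (le_antisymm (h ▸ htop s) (hCu.pos s))
  refine le_antisymm (htop s) (hCu.le_of_forall_wayBelow_le fun a' ha' => ?_)
  obtain ⟨n, hn⟩ := hsimple s infty hs0 hinf0 a' ha'
  exact hn.trans (nsmul_le_self_of_two_nsmul_le (hCu.pos s) h2 n)

end CuSemigroup

theorem stmt18_general {S : Type*} [AddCommMonoid S] [PartialOrder S] [IsOrderedAddMonoid S] (hCu : CuSemigroup S)
    (hsimple : CuSimple S) (infty : S) (htop : ∀ s : S, s ≤ infty)
    (hQQ : ∀ z : S, (∃ m : ℕ, 1 ≤ m ∧ 2 • (m • z) ≤ m • z) → 2 • z ≤ z)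
    (y : ℕ → S) (m : ℕ) (hm : 1 ≤ m)
    (hsum : ∀ k : ℕ, ∀ s : S,
      IsLUB (Set.range fun N => ∑ n ∈ Finset.Ico k N, y n) s → m • s = infty) :
    ∀ s : S, IsLUB (Set.range fun N => ∑ n ∈ Finset.range N, y n) s → s = infty := by
  intro s hs
  have hms : m • s = infty := hsum 0 s (by simpa only [Finset.range_eq_Ico] using hs)
  by_cases hs0 : s = 0
  · rw [← hms, hs0, smul_zero]
  exact hCu.eq_top_of_two_nsmul_le hsimple htop hs0 (hQQ s ⟨m, hm, hms ▸ htop _⟩)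

/-- In a simple Cu-semigroup, property (QQ) implies the corona factorization property. -/
theorem stmt18 {S : Type*} [AddCommMonoid S] [PartialOrder S] [IsOrderedAddMonoid S] (hCu : CuSemigroup S)
    (hsimple : CuSimple S) (infty : S) (htop : ∀ s : S, s ≤ infty)
    (hQQ : ∀ z : S, (∃ m : ℕ, 1 ≤ m ∧ 2 • (m • z) ≤ m • z) → 2 • z ≤ z)
    (y : ℕ → S) (hy : ∀ n : ℕ, CuWayBelow (y n) infty) (m : ℕ) (hm : 1 ≤ m)
    (hsum : ∀ k : ℕ, ∀ s : S,
      IsLUB (Set.range fun N => ∑ n ∈ Finset.Ico k N, y n) s → m • s = infty) :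
    ∀ s : S, IsLUB (Set.range fun N => ∑ n ∈ Finset.range N, y n) s → s = infty :=
  stmt18_general hCu hsimple infty htop hQQ y m hm hsum
end
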